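/- arXiv:2501.05593 — 6 statements merged into one kernel-verified Lean document; each statement's English description precedes it below -/
import Mathlib

section
/- There is a size- and distance-preserving bijection between binary box codes of size M with pairwise protected distance ≥ d and bipartite d-coverings of the complete graph K_M; consequently n_2^□(M,d) = cap(M,d)/M, where cap(M,d) is the minimum of ∑_i |V(H_i)| over all collections H = {H_1, H_2, …} of complete bipartite graphs on subsets of [M] such that every edge of K_M lies in at least d of the H_i. -/
/-- Protected distance between two binary words over `Option (Fin 2)`. -/
def pdist {η : ℕ} (w w' : Fin η → Option (Fin 2)) : ℕ :=
  (Finset.univ.filter (fun i => ∃ a b : Fin 2, w i = some a ∧ w' i = some b ∧ a ≠ b)).card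

/-- Number of protected coordinates of a word. -/
def plen {η : ℕ} (w : Fin η → Option (Fin 2)) : ℕ :=
  (Finset.univ.filter (fun i => (w i).isSome)).card

lemma plen_sum {η M : ℕ} (c : Fin M → Fin η → Option (Fin 2)) :
    ∑ m, plen (c m) =
      ∑ i, (Finset.univ.filter (fun m => ((c m) i).isSome)).card := by
  simp only [plen, Finset.card_filter]
  rw [Finset.sum_comm]

/-- correspondence between binary box codes of size `M` with pairwise
protected distance `≥ d` and bipartite `d`-coverings of `K_M`: a total of `N` protected
symbols is achievable by a box code iff a total capacity of `N` is achievable by a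
covering. Consequently `n_2^□(M,d) = cap(M,d)/M`. -/
theorem box_code_iff_bipartite_covering (M d N : ℕ) (hM : 1 ≤ M) (hd : 1 ≤ d) :
    (∃ (η : ℕ) (c : Fin M → Fin η → Option (Fin 2)), Function.Injective c ∧
      (∀ m m' : Fin M, m ≠ m' → d ≤ pdist (c m) (c m')) ∧
      ∑ m, plen (c m) = N) ↔
    (∃ (η : ℕ) (A B : Fin η → Finset (Fin M)),
      (∀ i, Disjoint (A i) (B i)) ∧
      (∀ m m' : Fin M, m ≠ m' →
        d ≤ (Finset.univ.filter
          (fun i => (m ∈ A i ∧ m' ∈ B i) ∨ (m ∈ B i ∧ m' ∈ A i))).card) ∧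
      ∑ i, ((A i).card + (B i).card) = N) := by
  constructor
  · rintro ⟨η, c, -, hdist, hsum⟩
    refine ⟨η, fun i => Finset.univ.filter (fun m => c m i = some 0),
      fun i => Finset.univ.filter (fun m => c m i = some 1), ?_, ?_, ?_⟩
    · intro i
      simp only [Finset.disjoint_left, Finset.mem_filter]
      rintro m ⟨-, h0⟩ ⟨-, h1⟩
      rw [h0] at h1; simp at h1
    · intro m m' hmm'
      refine (hdist m m' hmm').trans (le_of_eq ?_)
      unfold pdist
      congr 1
      apply Finset.filter_congr
      intro i _
      simp only [Finset.mem_filter, Finset.mem_univ, true_and]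
      constructor
      · rintro ⟨a, b, ha, hb, hab⟩
        fin_cases a <;> fin_cases b <;> simp_all
      · rintro (⟨h0, h1⟩ | ⟨h1, h0⟩)
        · exact ⟨0, 1, h0, h1, by decide⟩
        · exact ⟨1, 0, h1, h0, by decide⟩
    · rw [← hsum, plen_sum]
      apply Finset.sum_congr rfl
      intro i _
      rw [← Finset.card_union_of_disjoint]
      · congr 1
        ext m
        simp only [Finset.mem_union, Finset.mem_filter, Finset.mem_univ, true_and]
        rcases h : c m i with _ | a
        · simp [h]
        · fin_cases a <;> simp [h]
      · simp only [Finset.disjoint_left, Finset.mem_filter]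
        rintro m ⟨-, h0⟩ ⟨-, h1⟩
        rw [h0] at h1; simp at h1
  · rintro ⟨η, A, B, hdisj, hdist, hsum⟩
    set c : Fin M → Fin η → Option (Fin 2) := fun m i =>
      if m ∈ A i then some 0 else if m ∈ B i then some 1 else none with hc
    have key : ∀ m m' : Fin M, ∀ i : Fin η,
        (∃ a b : Fin 2, c m i = some a ∧ c m' i = some b ∧ a ≠ b) ↔
        ((m ∈ A i ∧ m' ∈ B i) ∨ (m ∈ B i ∧ m' ∈ A i)) := by
      intro m m' i
      constructor
      · rintro ⟨a, b, ha, hb, hab⟩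
        simp only [hc] at ha hb
        split_ifs at ha hb <;> simp_all
      · rintro (⟨h, h'⟩ | ⟨h, h'⟩)
        · refine ⟨0, 1, ?_, ?_, by decide⟩
          · simp [hc, h]
          · have : m' ∉ A i := Finset.disjoint_right.mp (hdisj i) h'
            simp [hc, this, h']
        · refine ⟨1, 0, ?_, ?_, by decide⟩
          · have : m ∉ A i := Finset.disjoint_right.mp (hdisj i) h
            simp [hc, this, h]
          · simp [hc, h']
    have hdist' : ∀ m m' : Fin M, m ≠ m' → d ≤ pdist (c m) (c m') := by
      intro m m' h
      refine (hdist m m' h).trans (le_of_eq ?_)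
      unfold pdist
      congr 1
      apply (Finset.filter_congr ?_).symm
      intro i _
      exact key m m' i
    refine ⟨η, c, ?_, hdist', ?_⟩
    · intro m m' hcm
      by_contra h
      have := hdist' m m' h
      rw [hcm] at this
      have : pdist (c m') (c m') = 0 := by
        unfold pdist
        simp only [Finset.card_eq_zero, Finset.filter_eq_empty_iff]
        rintro i - ⟨a, b, ha, hb, hab⟩
        rw [ha] at hb; exact hab (Option.some_injective _ hb)
      omega
    · rw [plen_sum, ← hsum]
      apply Finset.sum_congr rfl
      intro i _
      rw [← Finset.card_union_of_disjoint (hdisj i)]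
      congr 1
      ext m
      simp only [Finset.mem_filter, Finset.mem_univ, true_and, Finset.mem_union, hc]
      by_cases hmA : m ∈ A i <;> by_cases hmB : m ∈ B i <;> simp_all
end

section
/- For any graph G on M vertices with independence number α(G), and any bipartite d-covering H_1,…,H_η of G, the normalized capacity (1/M)·∑_i |V(H_i)| is at least 2d/α(G) − 2d/M. -/
/-!
A biclique on disjoint parts `A`, `B` contains `|A||B| ≤ M (|A| + |B|) / 4` edges, so counting
the edges of `G` with multiplicity gives `4 d |E| ≤ M ∑ᵢ (|Aᵢ| + |Bᵢ|)`. On the other side, the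
complement of `G` has no clique on `α + 1` vertices, so by Turán's theorem it has at most
`(1 - 1/α) M² / 2` edges, that is `M² ≤ α (2 |E| + M)`. Eliminating `|E|` gives the bound.
-/

/-- A finset of vertices is independent in `G`. -/
def IsIndepSet {V : Type*} (G : SimpleGraph V) (s : Finset V) : Prop :=
  ∀ u ∈ s, ∀ v ∈ s, u ≠ v → ¬ G.Adj u v

/-- The independence number of `G`. -/
noncomputable def indepNum {V : Type*} [Fintype V] (G : SimpleGraph V) : ℕ :=
  sSup {n | ∃ s : Finset V, IsIndepSet G s ∧ s.card = n}

theorem indepNum_eq_simpleGraph_indepNum {V : Type*} [Fintype V] (G : SimpleGraph V) :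
    indepNum G = G.indepNum := by
  simp only [indepNum, SimpleGraph.indepNum, SimpleGraph.isNIndepSet_iff, IsIndepSet,
    SimpleGraph.IsIndepSet, Set.Pairwise, Finset.mem_coe]

namespace Finset

theorem four_mul_card_mul_card_le_of_disjoint {α : Type*} [Fintype α] {s t : Finset α}
    (h : Disjoint s t) : 4 * (#s * #t) ≤ Fintype.card α * (#s + #t) := by
  classical
  have hst : #s + #t ≤ Fintype.card α := card_union_of_disjoint h ▸ card_le_univ _
  zify at *
  nlinarith [sq_nonneg ((#s : ℤ) - #t)]

end Finset

namespace SimpleGraph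

open Finset Fintype

variable {V : Type*} (G : SimpleGraph V)

theorem one_le_indepNum [Finite V] [Nonempty V] : 1 ≤ G.indepNum := by
  inhabit V
  simpa using (show G.IsIndepSet ({default} : Finset V) by simp).card_le_indepNum

theorem cliqueFree_compl_indepNum_add_one [Finite V] : Gᶜ.CliqueFree (G.indepNum + 1) := by
  intro t ht
  have := ht.isClique.card_le_cliqueNum (G := Gᶜ)
  simp [ht.card_eq] at this

variable {G} in
theorem CliqueFree.mul_card_edgeFinset_le [Fintype V] [DecidableRel G.Adj] {r : ℕ} (hr : 0 < r)
    (h : G.CliqueFree (r + 1)) :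
    2 * r * #G.edgeFinset ≤ (r - 1) * card V ^ 2 := by
  obtain ⟨H, _, hH⟩ := exists_isTuranMaximal (V := V) hr
  obtain ⟨e⟩ := hH.nonempty_iso_turanGraph
  calc 2 * r * #G.edgeFinset ≤ 2 * r * #H.edgeFinset := Nat.mul_le_mul_left _ (hH.2 h)
    _ = 2 * r * #(turanGraph (card V) r).edgeFinset := by rw [e.card_edgeFinset_eq]
    _ ≤ (r - 1) * card V ^ 2 := mul_card_edgeFinset_turanGraph_le

variable [Fintype V] [DecidableEq V] [DecidableRel G.Adj]

theorem card_edgeFinset_add_card_edgeFinset_compl :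
    #G.edgeFinset + #Gᶜ.edgeFinset = (card V).choose 2 := by
  rw [← card_union_of_disjoint (disjoint_edgeFinset.2 disjoint_compl_right), ← edgeFinset_sup]
  convert card_edgeFinset_top_eq_card_choose_two (V := V)
  exact sup_compl_eq_top

theorem card_edgeFinset_mul_le_sum_card_mul_card {ι : Type*} [Fintype ι] {d : ℕ}
    (A B : ι → Finset V)
    (hcov : ∀ u v, G.Adj u v → d ≤ #{i | (u ∈ A i ∧ v ∈ B i) ∨ (u ∈ B i ∧ v ∈ A i)}) :
    d * #G.edgeFinset ≤ ∑ i, #(A i) * #(B i) := by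
  let covers (x : G.Dart) (i : ι) : Prop :=
    (x.fst ∈ A i ∧ x.snd ∈ B i) ∨ (x.fst ∈ B i ∧ x.snd ∈ A i)
  have hdarts : ∀ i, #{x | covers x i} ≤ 2 * (#(A i) * #(B i)) := by
    intro i
    calc #{x | covers x i} ≤ #(A i ×ˢ B i ∪ B i ×ˢ A i) := by
          refine card_le_card_of_injOn Dart.toProd (fun x hx => ?_) (fun x _ y _ => Dart.ext x y)
          simpa using hx
      _ ≤ 2 * (#(A i) * #(B i)) := by
          grw [card_union_le, card_product, card_product]; lia
  suffices 2 * (d * #G.edgeFinset) ≤ 2 * ∑ i, #(A i) * #(B i) by lia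
  calc 2 * (d * #G.edgeFinset) = ∑ _x : G.Dart, d := by
        rw [sum_const, card_univ, dart_card_eq_twice_card_edges, smul_eq_mul]; ring
    _ ≤ ∑ x : G.Dart, #{i | covers x i} := sum_le_sum fun x _ => hcov _ _ x.adj
    _ = ∑ i, #{x | covers x i} := sum_card_bipartiteAbove_eq_sum_card_bipartiteBelow covers
    _ ≤ 2 * ∑ i, #(A i) * #(B i) := by rw [mul_sum]; exact sum_le_sum fun i _ => hdarts i

theorem card_sq_le_indepNum_mul :
    card V ^ 2 ≤ G.indepNum * (2 * #G.edgeFinset + card V) := by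
  rcases isEmpty_or_nonempty V with hV | hV
  · simp
  have ha := G.one_le_indepNum
  have hturan := G.cliqueFree_compl_indepNum_add_one.mul_card_edgeFinset_le ha
  have hn : 1 ≤ card V := card_pos
  have htwice : 2 * (#G.edgeFinset + #Gᶜ.edgeFinset) = card V * (card V - 1) := by
    rw [card_edgeFinset_add_card_edgeFinset_compl, Nat.choose_two_right,
      Nat.mul_div_cancel' (Nat.even_mul_pred_self _).two_dvd]
  zify [ha, hn] at *
  nlinarith

end SimpleGraph

open Finset in
/-- for any bipartite `d`-covering of a graph `G` on `M` vertices, the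
normalized capacity `(1/M)·∑_i |V(H_i)|` is at least `2d/α(G) − 2d/M`. -/
theorem normalized_capacity_lower_bound (M η d : ℕ) (hM : 1 ≤ M)
    (G : SimpleGraph (Fin M))
    (A B : Fin η → Finset (Fin M)) (hdisj : ∀ i, Disjoint (A i) (B i))
    (hcov : ∀ u v : Fin M, G.Adj u v →
      d ≤ (Finset.univ.filter
        (fun i => (u ∈ A i ∧ v ∈ B i) ∨ (u ∈ B i ∧ v ∈ A i))).card) :
    (2 * d : ℝ) / indepNum G - (2 * d : ℝ) / M ≤
      (1 / M : ℝ) * ∑ i, ((A i).card + (B i).card : ℝ) := by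
  classical
  rw [indepNum_eq_simpleGraph_indepNum]
  have : Nonempty (Fin M) := Fin.pos_iff_nonempty.1 hM
  set a := G.indepNum
  set S := ∑ i, (#(A i) + #(B i))
  have ha : 1 ≤ a := G.one_le_indepNum
  have hturan : M ^ 2 ≤ a * (2 * #G.edgeFinset + M) := by
    simpa using G.card_sq_le_indepNum_mul
  have hcover : 4 * (d * #G.edgeFinset) ≤ M * S := by
    grw [G.card_edgeFinset_mul_le_sum_card_mul_card A B hcov, mul_sum, mul_sum]
    refine sum_le_sum fun i _ => ?_
    simpa using four_mul_card_mul_card_le_of_disjoint (hdisj i)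
  have hcleared : 2 * d * M ^ 2 ≤ a * M * S + 2 * d * a * M := by
    linarith [Nat.mul_le_mul_left (2 * d) hturan, Nat.mul_le_mul_left a hcover]
  have hM0 : (0 : ℝ) < M := by exact_mod_cast hM
  have ha0 : (0 : ℝ) < a := by exact_mod_cast ha
  rw [div_sub_div _ _ ha0.ne' hM0.ne', one_div_mul_eq_div, div_le_div_iff₀ (by positivity) hM0]
  have hcleared' : (2 * d * M ^ 2 : ℝ) ≤ a * M * S + 2 * d * a * M := by exact_mod_cast hcleared
  push_cast [S] at hcleared'
  linear_combination hcleared'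
end

section
/- Let n = 2^m − 1 with m ≥ 2, M = 2^n/(n+1), and M^□ = M/2 + ⌈M/(2n)⌉. Then M^□ · n > 2^{n−1}; consequently, by the Hamming (ball-packing) bound, every binary code with M^□ codewords and minimum distance 3 has block length at least n, i.e., n_2(M^□, 3) ≥ n. -/
/-!
Radius-`1` Hamming balls about the codewords of a binary code of length `ℓ` and minimum
distance `3` are disjoint and have `ℓ + 1` points each, so `M (ℓ + 1) ≤ 2 ^ ℓ`; as
`2 ^ (k - 1) / k` is nondecreasing in `k`, any `M` with `M n > 2 ^ (n - 1)` then forces `ℓ ≥ n`.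
For `M□` this holds because `M = 2 ^ (n - m)` is a power of `2` while `n` is odd and `> 1`:
hence `2 n ∤ M`, so `2 n ⌈M / (2 n)⌉ > M` and `2 M□ n > M n + M = 2 ^ n`.
-/

open Finset

theorem hammingDist_update_le_one {ι : Type*} [Fintype ι] [DecidableEq ι] {β : ι → Type*}
    [∀ i, DecidableEq (β i)] (x : ∀ i, β i) (i : ι) (a : β i) :
    hammingDist x (Function.update x i a) ≤ 1 := by
  refine (card_le_card fun j hj => ?_).trans (card_singleton i).le
  by_contra hji
  exact (mem_filter.mp hj).2 (Function.update_of_ne (mem_singleton.not.mp hji) a x).symm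

namespace BinaryCode

variable {ℓ : ℕ}

/-- `x` itself, or `x` with one coordinate flipped: the Hamming ball of radius `1` about `x`
is the range of this map. -/
def flip (x : Fin ℓ → Fin 2) : Option (Fin ℓ) → Fin ℓ → Fin 2
  | none => x
  | some i => Function.update x i (x i + 1)

theorem hammingDist_flip_le_one (x : Fin ℓ → Fin 2) (a : Option (Fin ℓ)) :
    hammingDist x (flip x a) ≤ 1 := by
  cases a with
  | none => simp [flip]
  | some i => exact hammingDist_update_le_one x i _

theorem flip_injective (x : Fin ℓ → Fin 2) : Function.Injective (flip x) := by
  have hflip : ∀ b : Fin 2, b + 1 ≠ b := by decide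
  rintro (_ | i) (_ | j) h
  · rfl
  · simpa [flip] using congrFun h j
  · simpa [flip] using congrFun h i
  · obtain rfl | hij := eq_or_ne i j
    · rfl
    · have hi := congrFun h i
      simp only [flip, Function.update_self, Function.update_of_ne hij] at hi
      exact absurd hi (hflip _)

theorem card_mul_succ_le_two_pow (C : Finset (Fin ℓ → Fin 2))
    (hC : ∀ x ∈ C, ∀ y ∈ C, x ≠ y → 3 ≤ hammingDist x y) :
    #C * (ℓ + 1) ≤ 2 ^ ℓ := by
  have hinj : Set.InjOn (fun p : (Fin ℓ → Fin 2) × Option (Fin ℓ) => flip p.1 p.2)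
      ↑(C ×ˢ (univ : Finset (Option (Fin ℓ)))) := by
    rintro ⟨x, a⟩ hx ⟨y, b⟩ hy h
    simp only [coe_product, coe_univ, Set.mem_prod, mem_coe, Set.mem_univ, and_true] at hx hy h
    obtain rfl : x = y := by
      by_contra hxy
      have : hammingDist x y ≤ 1 + 1 := calc
        hammingDist x y ≤ hammingDist x (flip x a) + hammingDist (flip x a) y :=
          hammingDist_triangle _ _ _
        _ = hammingDist x (flip x a) + hammingDist y (flip y b) := by
          rw [h, hammingDist_comm (flip y b) y]
        _ ≤ 1 + 1 := add_le_add (hammingDist_flip_le_one x a) (hammingDist_flip_le_one y b)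
      exact absurd (hC x hx y hy hxy) (by omega)
    rw [flip_injective x h]
  simpa [card_product, Fintype.card_option, Fintype.card_fun] using
    card_le_card_of_injOn _ (fun _ _ => mem_univ _) hinj

end BinaryCode

theorem lt_mul_ceil_div_of_not_dvd {M k : ℕ} (hk0 : 0 < k) (hk : ¬ k ∣ M) :
    M < k * ⌈(M : ℚ) / k⌉₊ := by
  refine lt_of_le_of_ne ?_ fun h => hk ⟨_, h⟩
  have := Nat.le_ceil ((M : ℚ) / k)
  rw [div_le_iff₀ (by positivity)] at this
  exact_mod_cast this.trans_eq (mul_comm _ _)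

theorem not_dvd_two_pow_of_odd {n : ℕ} (hodd : Odd n) (hn : n ≠ 1) (k : ℕ) : ¬ n ∣ 2 ^ k :=
  fun h => hn ((Nat.coprime_two_right.mpr hodd).pow_right k |>.eq_one_of_dvd h)

theorem succ_mul_two_pow_le {j k : ℕ} (hjk : j ≤ k) : (k + 1) * 2 ^ j ≤ (j + 1) * 2 ^ k := by
  induction k, hjk using Nat.le_induction with
  | base => rfl
  | succ k _ ih => calc
      (k + 1 + 1) * 2 ^ j ≤ 2 * ((k + 1) * 2 ^ j) := by nlinarith [Nat.one_le_two_pow (n := j)]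
      _ ≤ 2 * ((j + 1) * 2 ^ k) := by gcongr
      _ = (j + 1) * 2 ^ (k + 1) := by ring

theorem le_of_mul_succ_le_two_pow {M ℓ n : ℕ} (hpack : M * (ℓ + 1) ≤ 2 ^ ℓ)
    (hM : 2 ^ (n - 1) < M * n) : n ≤ ℓ := by
  by_contra! hℓ
  have := succ_mul_two_pow_le (Nat.le_sub_one_of_lt hℓ)
  rw [Nat.sub_add_cancel (by omega)] at this
  have : M * n * 2 ^ ℓ < M * n * 2 ^ ℓ := calc
    M * n * 2 ^ ℓ ≤ M * ((ℓ + 1) * 2 ^ (n - 1)) := by rw [mul_assoc]; gcongr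
    _ ≤ 2 ^ ℓ * 2 ^ (n - 1) := by rw [← mul_assoc]; gcongr
    _ < M * n * 2 ^ ℓ := by rw [mul_comm]; gcongr
  exact lt_irrefl _ this

theorem mul_succ_lt_two_mul_box_mul {M n : ℕ} (hn : 0 < n) (heven : 2 ∣ M)
    (hdvd : ¬ 2 * n ∣ M) : M * (n + 1) < 2 * ((M / 2 + ⌈(M : ℚ) / (2 * n)⌉₊) * n) := by
  have := lt_mul_ceil_div_of_not_dvd (by positivity) hdvd
  push_cast at this
  obtain ⟨t, rfl⟩ := heven
  rw [Nat.mul_div_cancel_left t two_pos]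
  nlinarith

/-- with `n = 2^m − 1` (`m ≥ 2`), `M = 2^n/(n+1)`, and
`M□ = M/2 + ⌈M/(2n)⌉`, one has `M□·n > 2^(n−1)`; hence by the ball-packing bound every
binary code with `M□` codewords and minimum distance `3` has block length at least `n`. -/
theorem hamming_packing_length_bound (m : ℕ) (hm : 2 ≤ m) (n M Mbox : ℕ)
    (hn : n = 2 ^ m - 1) (hM : M = 2 ^ n / (n + 1))
    (hMbox : Mbox = M / 2 + ⌈(M : ℚ) / (2 * n)⌉₊) :
    2 ^ (n - 1) < Mbox * n ∧
    ∀ (ℓ : ℕ) (C : Finset (Fin ℓ → Fin 2)), C.card = Mbox →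
      (∀ x ∈ C, ∀ y ∈ C, x ≠ y → 3 ≤ hammingDist x y) → n ≤ ℓ := by
  have hmn : m < n := by
    have := Nat.lt_two_pow_self (n := m - 1)
    rw [← Nat.two_pow_pred_mul_two (by omega : 0 < m)] at hn; omega
  have hn1 : n + 1 = 2 ^ m := by have := Nat.one_le_two_pow (n := m); omega
  have hMpow : M = 2 ^ (n - m) := by rw [hM, hn1, Nat.pow_div (by omega) two_pos]
  have hodd : Odd n := by
    have := dvd_pow_self 2 (by omega : m ≠ 0)
    exact Nat.odd_iff.mpr (by omega)
  have hndvd : ¬ 2 * n ∣ M := fun h =>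
    not_dvd_two_pow_of_odd hodd (by omega) (n - m) (hMpow ▸ (dvd_mul_left n 2).trans h)
  have hbox : 2 ^ (n - 1) < Mbox * n := by
    have h := mul_succ_lt_two_mul_box_mul (by omega) (hMpow ▸ dvd_pow_self 2 (by omega)) hndvd
    rw [← hMbox, hMpow, hn1, ← pow_add, Nat.sub_add_cancel hmn.le,
      ← Nat.two_pow_pred_mul_two (by omega)] at h
    omega
  refine ⟨hbox, fun ℓ C hC hdist => ?_⟩
  exact le_of_mul_succ_le_two_pow (hC ▸ BinaryCode.card_mul_succ_le_two_pow C hdist) hbox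
end

section
/- For the binary Hamming code of length n = 2^m − 1, the number A_i of codewords of weight i equals (C(n,i) + n·Δ_i)/(n+1), where Δ_i = C((n−1)/2, ⌊i/2⌋) if i ≡ 0 or 3 (mod 4) and Δ_i = −C((n−1)/2, ⌊i/2⌋) if i ≡ 1 or 2 (mod 4). -/
/-!
Write `χ(c) = (-1)^c` on `ZMod 2` and, for a word `b` of length `n` and weight `w`, let
`K_i(w)` be the coefficient of `X^i` in `(1 - X)^w (1 + X)^(n - w) = ∑_x χ(x ⬝ b) X^(wt x)`
(a Krawtchouk number). Detecting `H x = 0` by `2^m [H x = 0] = ∑_u χ(u ⬝ H x)` and swapping the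
sums gives `2^m A_i = ∑_u K_i(wt (uᵀ H))`. For the Hamming code and `u ≠ 0`, orthogonality again
gives `∑_{v ≠ 0} χ(u ⬝ v) = -1`, so `uᵀ H` has weight `(n + 1) / 2`. Hence
`(n + 1) A_i = C(n, i) + n K_i((n + 1) / 2)`, and writing `n = 2M + 1`,
`(1 - X)^(M+1) (1 + X)^M = (1 - X)(1 - X²)^M` gives the last coefficient.
-/

open Finset Polynomial

noncomputable def krawtchouk (n w i : ℕ) : ℤ := ((1 - X) ^ w * (1 + X) ^ (n - w) : ℤ[X]).coeff i

theorem krawtchouk_zero (n i : ℕ) : krawtchouk n 0 i = n.choose i := by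
  simp [krawtchouk, coeff_one_add_X_pow]

theorem coeff_sum_C_mul_X_pow {R ι : Type*} [Semiring R] (s : Finset ι) (a : ι → R) (d : ι → ℕ)
    (i : ℕ) : (∑ x ∈ s, C (a x) * X ^ d x).coeff i = ∑ x ∈ s with d x = i, a x := by
  simp [finsetSum_coeff, sum_filter, eq_comm]

section Coefficients

variable {R : Type*} [CommRing R]

theorem coeff_one_sub_X_sq_pow (M j : ℕ) :
    ((1 - X ^ 2 : R[X]) ^ M).coeff j
      = if 2 ∣ j then (-1 : R) ^ (j / 2) * M.choose (j / 2) else 0 := by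
  have h : (1 - X ^ 2 : R[X]) ^ M = expand R 2 (((1 + X) ^ M).comp (C (-1) * X)) := by
    simp [sub_eq_add_neg]
  rw [h, coeff_expand two_pos, comp_C_mul_X_coeff, coeff_one_add_X_pow, mul_comm]

theorem coeff_one_sub_X_pow_succ_mul_one_add_X_pow (M i : ℕ) :
    ((1 - X) ^ (M + 1) * (1 + X) ^ M : R[X]).coeff i
      = (-1 : R) ^ ((i + 1) / 2) * M.choose (i / 2) := by
  have h : ((1 - X) ^ (M + 1) * (1 + X) ^ M : R[X]) = (1 - X ^ 2) ^ M - X ^ 1 * (1 - X ^ 2) ^ M := by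
    rw [show (1 - X ^ 2 : R[X]) = (1 - X) * (1 + X) by ring, mul_pow]
    ring
  rw [h, coeff_sub, coeff_X_pow_mul', coeff_one_sub_X_sq_pow, coeff_one_sub_X_sq_pow]
  obtain ⟨k, rfl | rfl⟩ := Nat.even_or_odd' i
  · rcases k with _ | k
    · simp
    · simp [show ¬ 2 ∣ 2 * (k + 1) - 1 by omega, show (2 * (k + 1) + 1) / 2 = k + 1 by omega]
  · simp [show ¬ 2 ∣ 2 * k + 1 by omega, show (2 * k + 1 + 1) / 2 = k + 1 by omega,
      show (2 * k + 1) / 2 = k by omega, pow_succ]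

theorem neg_one_pow_mul_eq_ite (i : ℕ) (c : R) :
    (-1 : R) ^ ((i + 1) / 2) * c = if i % 4 = 0 ∨ i % 4 = 3 then c else -c := by
  rcases Nat.even_or_odd ((i + 1) / 2) with ⟨r, hr⟩ | ⟨r, hr⟩
  · rw [Even.neg_one_pow ⟨r, hr⟩, one_mul, if_pos (by omega)]
  · rw [Odd.neg_one_pow ⟨r, hr⟩, neg_one_mul, if_neg (by omega)]

end Coefficients

theorem krawtchouk_of_two_mul_eq_add_one {n w : ℕ} (h : 2 * w = n + 1) (i : ℕ) :
    krawtchouk n w i = (-1) ^ ((i + 1) / 2) * ((n - 1) / 2).choose (i / 2) := by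
  obtain ⟨M, rfl, rfl⟩ : ∃ M, w = M + 1 ∧ n = 2 * M + 1 := ⟨w - 1, by omega, by omega⟩
  rw [krawtchouk, show 2 * M + 1 - (M + 1) = M by omega, show (2 * M + 1 - 1) / 2 = M by omega,
    coeff_one_sub_X_pow_succ_mul_one_add_X_pow]

theorem AddChar.map_sum_eq_prod {A M ι : Type*} [AddCommMonoid A] [CommMonoid M]
    (ψ : AddChar A M) (s : Finset ι) (f : ι → A) : ψ (∑ i ∈ s, f i) = ∏ i ∈ s, ψ (f i) := by
  induction s using Finset.cons_induction with
  | empty => simp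
  | cons a s ha ih => rw [sum_cons, prod_cons, AddChar.map_add_eq_mul, ih]

theorem dotProduct_sum_smul {R V ι : Type*} [CommSemiring R] [Fintype V] [Fintype ι]
    (u : ι → R) (x : V → R) (H : V → ι → R) :
    u ⬝ᵥ ∑ v, x v • H v = x ⬝ᵥ fun v => u ⬝ᵥ H v := by
  simp only [dotProduct_sum, dotProduct_smul, smul_eq_mul]
  rfl

def signChar : AddChar (ZMod 2) ℤ := AddChar.zmodChar 2 (by norm_num : (-1 : ℤ) ^ 2 = 1)

@[simp] theorem signChar_one : signChar 1 = -1 := rfl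

theorem sum_signChar_dotProduct {ι : Type*} [Fintype ι] [DecidableEq ι] (w : ι → ZMod 2) :
    ∑ u, signChar (u ⬝ᵥ w) = if w = 0 then 2 ^ Fintype.card ι else 0 := by
  let ψ : AddChar (ι → ZMod 2) ℤ :=
    signChar.compAddMonoidHom (AddMonoidHom.mk' (· ⬝ᵥ w) fun u v => add_dotProduct u v w)
  split_ifs with hw
  · simp [hw]
  · obtain ⟨j, hj⟩ := Function.ne_iff.1 hw
    refine (AddChar.sum_eq_zero_iff_ne_zero (ψ := ψ)).2 (AddChar.ne_zero_iff.2 ⟨Pi.single j 1, ?_⟩)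
    simp [ψ, single_dotProduct, show w j = 1 from Fin.eq_one_of_ne_zero _ hj]

section Weights

variable {V : Type*} [Fintype V]

@[to_additive]
theorem prod_comp_zmod_two {M : Type*} [CommMonoid M] (g : ZMod 2 → M) (b : V → ZMod 2) :
    ∏ v, g (b v) = g 1 ^ hammingNorm b * g 0 ^ (Fintype.card V - hammingNorm b) := by
  have hg : ∀ v, g (b v) = if b v ≠ 0 then g 1 else g 0 := fun v => by
    split_ifs with h
    · rw [show b v = 1 from Fin.eq_one_of_ne_zero _ h]
    · rw [not_not.1 h]
  have hcard := card_filter_add_card_filter_not (s := univ) (fun v => b v ≠ 0)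
  rw [prod_congr rfl fun v _ => hg v, prod_ite, prod_const, prod_const]
  rw [card_univ] at hcard
  unfold hammingNorm
  congr 2
  omega

theorem hammingNorm_eq_sum_val (x : V → ZMod 2) : hammingNorm x = ∑ v, (x v).val := by
  simp [sum_comp_zmod_two, ZMod.val_one]

theorem sum_signChar (b : V → ZMod 2) :
    ∑ v, signChar (b v) = Fintype.card V - 2 * hammingNorm b := by
  rw [sum_comp_zmod_two, signChar_one, AddChar.map_zero_eq_one]
  have := hammingNorm_le_card_fintype (x := b)
  simp
  omega

variable [DecidableEq V]

theorem sum_signChar_dotProduct_mul_X_pow_hammingNorm (b : V → ZMod 2) :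
    ∑ x : V → ZMod 2, C (signChar (x ⬝ᵥ b)) * X ^ hammingNorm x
      = ((1 - X) ^ hammingNorm b * (1 + X) ^ (Fintype.card V - hammingNorm b) : ℤ[X]) :=
  calc ∑ x : V → ZMod 2, C (signChar (x ⬝ᵥ b)) * X ^ hammingNorm x
      = ∑ x : V → ZMod 2, ∏ v, C (signChar (x v * b v)) * X ^ (x v).val := by
        simp only [dotProduct, AddChar.map_sum_eq_prod, map_prod, hammingNorm_eq_sum_val,
          prod_pow_eq_pow_sum, prod_mul_distrib]
    _ = ∏ v, ∑ c : ZMod 2, C (signChar (c * b v)) * X ^ c.val :=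
        (Fintype.prod_sum fun v (c : ZMod 2) => C (signChar (c * b v)) * X ^ c.val).symm
    _ = ∏ v, (1 + C (signChar (b v)) * X) := by
        congr! 1 with v
        rw [show (univ : Finset (ZMod 2)) = {0, 1} from rfl, sum_pair zero_ne_one]
        simp [ZMod.val_one]
    _ = _ := by
        rw [prod_comp_zmod_two (fun c => 1 + C (signChar c) * X)]
        simp [sub_eq_add_neg]

theorem sum_signChar_dotProduct_of_hammingNorm_eq (b : V → ZMod 2) (i : ℕ) :
    ∑ x : V → ZMod 2 with hammingNorm x = i, signChar (x ⬝ᵥ b)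
      = krawtchouk (Fintype.card V) (hammingNorm b) i := by
  rw [krawtchouk, ← sum_signChar_dotProduct_mul_X_pow_hammingNorm, coeff_sum_C_mul_X_pow]

theorem two_pow_mul_card_codewords_eq_sum_krawtchouk {ι : Type*} [Fintype ι] [DecidableEq ι]
    (H : V → ι → ZMod 2) (i : ℕ) :
    (2 ^ Fintype.card ι : ℤ) * Nat.card {x : V → ZMod 2 // ∑ v, x v • H v = 0 ∧ hammingNorm x = i}
      = ∑ u : ι → ZMod 2, krawtchouk (Fintype.card V) (hammingNorm fun v => u ⬝ᵥ H v) i := by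
  have hcount : (Nat.card {x : V → ZMod 2 // ∑ v, x v • H v = 0 ∧ hammingNorm x = i} : ℤ)
      = ∑ x : V → ZMod 2 with hammingNorm x = i, if ∑ v, x v • H v = 0 then 1 else 0 := by
    simp [Nat.card_eq_fintype_card, Fintype.card_subtype, sum_boole, filter_filter, and_comm]
  calc (2 ^ Fintype.card ι : ℤ) * Nat.card {x : V → ZMod 2 // ∑ v, x v • H v = 0 ∧ hammingNorm x = i}
      = ∑ x : V → ZMod 2 with hammingNorm x = i,
          if ∑ v, x v • H v = 0 then 2 ^ Fintype.card ι else 0 := by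
        rw [hcount, mul_sum]
        simp only [mul_ite, mul_one, mul_zero]
    _ = ∑ x : V → ZMod 2 with hammingNorm x = i, ∑ u : ι → ZMod 2,
          signChar (u ⬝ᵥ ∑ v, x v • H v) := by
        simp only [sum_signChar_dotProduct]
    _ = ∑ u : ι → ZMod 2, ∑ x : V → ZMod 2 with hammingNorm x = i,
          signChar (x ⬝ᵥ fun v => u ⬝ᵥ H v) := by
        simp only [dotProduct_sum_smul]
        exact sum_comm
    _ = _ := by simp only [sum_signChar_dotProduct_of_hammingNorm_eq]

end Weights

theorem two_mul_hammingNorm_dotProduct_of_ne_zero {ι : Type*} [Fintype ι] [DecidableEq ι]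
    {u : ι → ZMod 2} (hu : u ≠ 0) :
    2 * hammingNorm (fun v : {w : ι → ZMod 2 // w ≠ 0} => u ⬝ᵥ v.1)
      = Fintype.card {w : ι → ZMod 2 // w ≠ 0} + 1 := by
  have hsum : ∑ v : {w : ι → ZMod 2 // w ≠ 0}, signChar (u ⬝ᵥ v.1) = -1 := by
    rw [← sum_subtype (univ.erase 0) (by simp) (fun w => signChar (u ⬝ᵥ w)),
      sum_erase_eq_sub (mem_univ _)]
    simp_rw [dotProduct_comm u]
    simp [sum_signChar_dotProduct, hu]
  have := sum_signChar (fun v : {w : ι → ZMod 2 // w ≠ 0} => u ⬝ᵥ v.1)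
  omega

theorem hamming_code_weight_enumerator_general (m : ℕ) (n : ℕ) (hn : n = 2 ^ m - 1)
    (i : ℕ)
    (A : ℕ)
    (hA : A = Nat.card {x : {f : Fin m → ZMod 2 // f ≠ 0} → ZMod 2 //
      (∑ v : {f : Fin m → ZMod 2 // f ≠ 0}, x v • v.val) = 0 ∧ hammingNorm x = i})
    (Δ : ℤ)
    (hΔ : Δ = if i % 4 = 0 ∨ i % 4 = 3 then (((n - 1) / 2).choose (i / 2) : ℤ)
              else -(((n - 1) / 2).choose (i / 2) : ℤ)) :
    ((n : ℤ) + 1) * A = (n.choose i : ℤ) + n * Δ := by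
  have hcard : Fintype.card {f : Fin m → ZMod 2 // f ≠ 0} = n := by
    simp [Fintype.card_subtype_compl, hn]
  have hterm : ∀ u : Fin m → ZMod 2,
      krawtchouk n (hammingNorm fun v : {f : Fin m → ZMod 2 // f ≠ 0} => u ⬝ᵥ v.1) i
        = if u = 0 then (n.choose i : ℤ) else Δ := by
    intro u
    split_ifs with hu
    · simp [hu, ← Pi.zero_def, krawtchouk_zero]
    · rw [krawtchouk_of_two_mul_eq_add_one (hcard ▸ two_mul_hammingNorm_dotProduct_of_ne_zero hu),
        neg_one_pow_mul_eq_ite, hΔ]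
  have h2m : (n : ℤ) + 1 = 2 ^ Fintype.card (Fin m) := by
    rw [Fintype.card_fin, hn]
    push_cast [Nat.one_le_two_pow]
    ring
  rw [h2m, hA, two_pow_mul_card_codewords_eq_sum_krawtchouk, hcard,
    sum_congr rfl fun u _ => hterm u]
  simp [sum_ite, filter_eq', filter_ne', card_univ, hn]

/-- weight enumerator of the binary Hamming code of length
`n = 2^m − 1` (whose parity-check matrix has as columns all nonzero vectors of `F_2^m`):
the number `A_i` of codewords of weight `i` satisfies `(n+1)·A_i = C(n,i) + n·Δ_i`, where
`Δ_i = ±C((n−1)/2, ⌊i/2⌋)` with sign `+` iff `i ≡ 0, 3 (mod 4)`. -/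
theorem hamming_code_weight_enumerator (m : ℕ) (hm : 2 ≤ m) (n : ℕ) (hn : n = 2 ^ m - 1)
    (i : ℕ) (hi : i ≤ n)
    (A : ℕ)
    (hA : A = Nat.card {x : {f : Fin m → ZMod 2 // f ≠ 0} → ZMod 2 //
      (∑ v : {f : Fin m → ZMod 2 // f ≠ 0}, x v • v.val) = 0 ∧ hammingNorm x = i})
    (Δ : ℤ)
    (hΔ : Δ = if i % 4 = 0 ∨ i % 4 = 3 then (((n - 1) / 2).choose (i / 2) : ℤ)
              else -(((n - 1) / 2).choose (i / 2) : ℤ)) :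
    ((n : ℤ) + 1) * A = (n.choose i : ℤ) + n * Δ :=
  hamming_code_weight_enumerator_general m n hn i A hA Δ hΔ
end

section
/- Let C ⊆ F_2^n be a binary code with covering radius 1 and |C| = 2^n/n (n even), and suppose C admits a partition P into disjoint pairs {c, c'} with Hamming distance d(c,c') = 1. For each pair let c ⊡ c' be the word obtained by replacing the single differing coordinate by □. Then the protected balls B^□_1(c ⊡ c') over all pairs in P are pairwise disjoint and their union is F_2^n; i.e., the box code {c ⊡ c' : {c,c'} ∈ P} is a perfect binary box code with 2^{n−1}/n codewords, length n−1, and minimum protected distance 3. -/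
/-- Protected distance to a fully protected word. -/
def pdistV {η : ℕ} (w : Fin η → Option (Fin 2)) (v : Fin η → Fin 2) : ℕ :=
  (Finset.univ.filter (fun i => ∃ a : Fin 2, w i = some a ∧ a ≠ v i)).card

/-- The meshing `c ⊡ c'` of two words differing in a single coordinate: replace the
differing coordinate by `□`. -/
def mesh {n : ℕ} (c c' : Fin n → Fin 2) : Fin n → Option (Fin 2) :=
  fun i => if c i = c' i then some (c i) else none

/-! The meshed word `c ⊡ c'` of a pair at Hamming distance 1 has protected ball
`B₁(c) ∪ B₁(c')`, and the two Hamming balls meet only in `{c, c'}`, so that protected ball has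
`2(n + 1) - 2 = 2n` words. The protected balls cover `F₂ⁿ` because the Hamming balls around `C`
do, and there are `|C| / 2` of them, of total size `|C| n = 2ⁿ`; a cover whose sizes add up to the
size of the space is a partition. Finally two box codewords at protected distance at most 2 have a
word within protected distance 1 of both, so the minimum distance is at least 3. -/

open Finset Function

lemma Finset.pairwiseDisjoint_of_sum_card_le {ι α : Type*} [DecidableEq ι] [DecidableEq α]
    {s : Finset ι} {t : ι → Finset α} (h : ∑ i ∈ s, #(t i) ≤ #(s.biUnion t)) :
    (s : Set ι).PairwiseDisjoint t := by
  intro a ha b hb hab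
  rw [Function.onFun, disjoint_left]
  intro x hxa hxb
  have hsub : s.biUnion t ⊆ (s.erase a).biUnion t ∪ (t a).erase x := by
    intro y hy
    obtain ⟨i, hi, hyi⟩ := mem_biUnion.mp hy
    by_cases hia : i = a
    · subst hia
      by_cases hyx : y = x
      · subst hyx
        exact mem_union_left _ (mem_biUnion.mpr ⟨b, mem_erase.mpr ⟨Ne.symm hab, hb⟩, hxb⟩)
      · exact mem_union_right _ (mem_erase.mpr ⟨hyx, hyi⟩)
    · exact mem_union_left _ (mem_biUnion.mpr ⟨i, mem_erase.mpr ⟨hia, hi⟩, hyi⟩)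
  have hle := (card_le_card hsub).trans (card_union_le _ _)
  have hrest : #((s.erase a).biUnion t) ≤ ∑ i ∈ s.erase a, #(t i) := card_biUnion_le
  have hsum := sum_erase_add s (fun i => #(t i)) ha
  have hx : 0 < #(t a) := card_pos.mpr ⟨x, hxa⟩
  rw [card_erase_of_mem hxa] at hle
  omega

lemma Finset.card_image_mul_two_eq_card {α β : Type*} [DecidableEq α] [DecidableEq β]
    {s : Finset α} {f : α → β} {g : α → α} (hne : ∀ a ∈ s, g a ≠ a)
    (hfib : ∀ a ∈ s, {b ∈ s | f b = f a} = {a, g a}) : #(s.image f) * 2 = #s := by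
  rw [card_eq_sum_card_image f s, sum_const_nat]
  intro b hb
  obtain ⟨a, ha, rfl⟩ := mem_image.mp hb
  rw [hfib a ha, card_pair (hne a ha).symm]

lemma Fin.two_add_one_eq_iff_ne {a b : Fin 2} : a + 1 = b ↔ a ≠ b := by
  revert a b; decide

lemma Fin.two_eq_of_ne_of_ne {a b c : Fin 2} (ha : a ≠ c) (hb : b ≠ c) : a = b := by
  revert a b c; decide

section Hamming

variable {ι : Type*} [Fintype ι] [DecidableEq ι] {β : ι → Type*} [∀ i, DecidableEq (β i)]

lemma hammingDist_eq_one_iff {x y : ∀ i, β i} :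
    hammingDist x y = 1 ↔ ∃ j, x j ≠ y j ∧ ∀ i ≠ j, x i = y i := by
  simp only [hammingDist, card_eq_one, eq_singleton_iff_unique_mem, mem_filter, mem_univ,
    true_and]
  refine exists_congr fun j => and_congr_right fun _ => forall_congr' fun i => ?_
  tauto

lemma hammingDist_eq_hammingDist_add_one {x y z : ∀ i, β i} {j : ι} (hj : x j ≠ y j)
    (hoff : ∀ i ≠ j, x i = y i) (hz : z j = x j) :
    hammingDist y z = hammingDist x z + 1 := by
  have : univ.filter (fun i => y i ≠ z i) = insert j (univ.filter fun i => x i ≠ z i) := by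
    ext i
    by_cases hij : i = j
    · subst hij; simp [hz, Ne.symm hj]
    · simp [hij, hoff i hij]
  rw [hammingDist, this, card_insert_of_notMem (by simp [hz]), hammingDist]

end Hamming

section Mesh

variable {n : ℕ}

lemma card_hammingBall_one (c : Fin n → Fin 2) :
    #{v | hammingDist c v ≤ 1} = n + 1 := by
  have hball : ({v | hammingDist c v ≤ 1} : Finset (Fin n → Fin 2)) =
      insert c (univ.image fun j => update c j (c j + 1)) := by
    ext v
    simp only [mem_filter, mem_univ, true_and, mem_insert, mem_image,
      Nat.le_one_iff_eq_zero_or_eq_one, hammingDist_eq_zero, hammingDist_eq_one_iff, update_eq_iff,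
      Fin.two_add_one_eq_iff_ne]
    tauto
  have hinj : Injective fun j => update c j (c j + 1) := by
    intro j k hjk
    by_contra hne
    simpa [update_of_ne hne, Fin.two_add_one_eq_iff_ne] using congrFun hjk j
  rw [hball, card_insert_of_notMem, card_image_of_injective _ hinj, card_univ, Fintype.card_fin]
  simp only [mem_image, mem_univ, true_and, not_exists]
  intro j hj
  simpa [Fin.two_add_one_eq_iff_ne] using congrFun hj j

lemma eq_or_eq_of_hammingDist_le_one {c c' v : Fin n → Fin 2} (h : hammingDist c c' = 1)
    (hc : hammingDist c v ≤ 1) (hc' : hammingDist c' v ≤ 1) : v = c ∨ v = c' := by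
  obtain ⟨j, hj, hoff⟩ := hammingDist_eq_one_iff.mp h
  by_cases hv : v j = c j
  · have := hammingDist_eq_hammingDist_add_one hj hoff hv
    exact Or.inl (hammingDist_eq_zero.mp (by omega)).symm
  · have hv' : v j = c' j := Fin.two_eq_of_ne_of_ne hv (Ne.symm hj)
    have := hammingDist_eq_hammingDist_add_one (Ne.symm hj) (fun i hi => (hoff i hi).symm) hv'
    exact Or.inr (hammingDist_eq_zero.mp (by omega)).symm

lemma mesh_comm (c c' : Fin n → Fin 2) : mesh c c' = mesh c' c := by
  funext i
  by_cases h : c i = c' i <;> simp [mesh, h, eq_comm]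

lemma pdistV_mesh (c c' v : Fin n → Fin 2) :
    pdistV (mesh c c') v = #{i | c i = c' i ∧ c i ≠ v i} := by
  unfold pdistV mesh
  congr 1
  ext i
  simp only [mem_filter, mem_univ, true_and]
  split_ifs with h <;> simp [h]

lemma pdistV_mesh_le_hammingDist (c c' v : Fin n → Fin 2) :
    pdistV (mesh c c') v ≤ hammingDist c v := by
  rw [pdistV_mesh]
  exact card_le_card fun i => by simp +contextual

lemma hammingDist_le_pdistV_mesh {c c' v : Fin n → Fin 2} {j : Fin n}
    (hoff : ∀ i ≠ j, c i = c' i) (hv : v j = c j) : hammingDist c v ≤ pdistV (mesh c c') v := by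
  rw [pdistV_mesh]
  refine card_le_card fun i hi => ?_
  simp only [mem_filter, mem_univ, true_and] at hi ⊢
  exact ⟨hoff i (by rintro rfl; exact hi hv.symm), hi⟩

lemma pdistV_mesh_le_one_iff {c c' : Fin n → Fin 2} (h : hammingDist c c' = 1)
    (v : Fin n → Fin 2) :
    pdistV (mesh c c') v ≤ 1 ↔ hammingDist c v ≤ 1 ∨ hammingDist c' v ≤ 1 := by
  refine ⟨fun hv => ?_, ?_⟩
  · obtain ⟨j, hj, hoff⟩ := hammingDist_eq_one_iff.mp h
    by_cases hvj : v j = c j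
    · exact Or.inl ((hammingDist_le_pdistV_mesh hoff hvj).trans hv)
    · have hv' : v j = c' j := Fin.two_eq_of_ne_of_ne hvj (Ne.symm hj)
      rw [mesh_comm] at hv
      exact Or.inr ((hammingDist_le_pdistV_mesh (fun i hi => (hoff i hi).symm) hv').trans hv)
  · rintro (hv | hv)
    · exact (pdistV_mesh_le_hammingDist c c' v).trans hv
    · exact mesh_comm c c' ▸ (pdistV_mesh_le_hammingDist c' c v).trans hv

lemma card_protectedBall_mesh {c c' : Fin n → Fin 2} (h : hammingDist c c' = 1) :
    #{v | pdistV (mesh c c') v ≤ 1} = 2 * n := by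
  have hinter : (univ.filter fun v => hammingDist c v ≤ 1) ∩
      (univ.filter fun v => hammingDist c' v ≤ 1) = {c, c'} := by
    ext v
    simp only [mem_inter, mem_filter, mem_univ, true_and, mem_insert, mem_singleton]
    refine ⟨fun hv => eq_or_eq_of_hammingDist_le_one h hv.1 hv.2, ?_⟩
    rintro (rfl | rfl)
    · simp [h, hammingDist_comm c']
    · simp [h]
  have hne : c ≠ c' := hammingDist_pos.mp (by omega)
  have := card_union_add_card_inter (univ.filter fun v => hammingDist c v ≤ 1)
    (univ.filter fun v => hammingDist c' v ≤ 1)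
  rw [hinter, card_pair hne, card_hammingBall_one, card_hammingBall_one, ← filter_or] at this
  simp_rw [pdistV_mesh_le_one_iff h]
  omega

lemma eq_or_eq_of_mesh_eq {c c' e e' : Fin n → Fin 2} (h : hammingDist c c' = 1)
    (he : mesh e e' = mesh c c') : e = c ∨ e = c' := by
  obtain ⟨j, hj, hoff⟩ := hammingDist_eq_one_iff.mp h
  have hagree : ∀ i ≠ j, e i = c i := by
    intro i hi
    have := congrFun he i
    rw [mesh, mesh, if_pos (hoff i hi)] at this
    split_ifs at this
    exact Option.some_injective _ this
  by_cases hej : e j = c j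
  · left
    funext i
    rcases eq_or_ne i j with rfl | hi
    exacts [hej, hagree i hi]
  · right
    funext i
    rcases eq_or_ne i j with rfl | hi
    exacts [Fin.two_eq_of_ne_of_ne hej (Ne.symm hj), (hagree i hi).trans (hoff i hi)]

lemma plen_mesh (c c' : Fin n → Fin 2) : plen (mesh c c') = n - hammingDist c c' := by
  have hsplit := card_filter_add_card_filter_not (s := univ) fun i => c i = c' i
  have hplen : plen (mesh c c') = #{i | c i = c' i} := by
    simp [plen, mesh, apply_ite]
  rw [card_univ, Fintype.card_fin] at hsplit
  rw [hplen, hammingDist]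
  simp only [ne_eq]
  omega

lemma card_image_mesh_mul_two {C : Finset (Fin n → Fin 2)}
    {pair : (Fin n → Fin 2) → (Fin n → Fin 2)}
    (hpair : ∀ c ∈ C, pair c ∈ C ∧ pair (pair c) = c ∧ hammingDist c (pair c) = 1) :
    #(C.image fun c => mesh c (pair c)) * 2 = #C := by
  refine card_image_mul_two_eq_card (g := pair)
    (fun c hc h => by simpa [h] using (hpair c hc).2.2) fun c hc => ?_
  ext e
  simp only [mem_filter, mem_insert, mem_singleton]
  refine ⟨fun he => eq_or_eq_of_mesh_eq (hpair c hc).2.2 he.2, ?_⟩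
  rintro (rfl | rfl)
  · exact ⟨hc, rfl⟩
  · exact ⟨(hpair c hc).1, by rw [(hpair c hc).2.1, mesh_comm]⟩

end Mesh

def splice {η : ℕ} (w w' : Fin η → Option (Fin 2)) (S : Finset (Fin η)) : Fin η → Fin 2 :=
  fun i => if i ∈ S then (w' i).getD ((w i).getD 0) else (w i).getD ((w' i).getD 0)

lemma splice_compl {η : ℕ} (w w' : Fin η → Option (Fin 2)) (S : Finset (Fin η)) :
    splice w' w Sᶜ = splice w w' S := by
  funext i
  by_cases hi : i ∈ S <;> simp [splice, hi]

lemma pdistV_splice_le {η : ℕ} (w w' : Fin η → Option (Fin 2)) (S : Finset (Fin η)) :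
    pdistV w (splice w w' S) ≤ #{i ∈ S | ∃ a b, w i = some a ∧ w' i = some b ∧ a ≠ b} := by
  refine card_le_card fun i hi => ?_
  simp only [mem_filter, mem_univ, true_and] at hi ⊢
  obtain ⟨a, ha, hav⟩ := hi
  by_cases hiS : i ∈ S
  · cases hw' : w' i with
    | none => simp [splice, hiS, ha, hw'] at hav
    | some b => exact ⟨hiS, a, b, ha, rfl, by simpa [splice, hiS, ha, hw'] using hav⟩
  · simp [splice, hiS, ha] at hav

-- `v` follows `w` on one half of the conflicting coordinates and `w'` on the other half.
lemma exists_pdistV_le_one_of_pdist_le_two {η : ℕ} {w w' : Fin η → Option (Fin 2)}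
    (h : pdist w w' ≤ 2) : ∃ v, pdistV w v ≤ 1 ∧ pdistV w' v ≤ 1 := by
  set D := univ.filter fun i => ∃ a b, w i = some a ∧ w' i = some b ∧ a ≠ b
  have hD : #D ≤ 2 := h
  obtain ⟨S, hSD, hS⟩ := exists_subset_card_eq (Nat.div_le_self #D 2)
  refine ⟨splice w w' S, ?_, ?_⟩
  · calc pdistV w (splice w w' S)
        ≤ #{i ∈ S | ∃ a b, w i = some a ∧ w' i = some b ∧ a ≠ b} := pdistV_splice_le w w' S
      _ ≤ #S := card_filter_le _ _
      _ ≤ 1 := by omega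
  · rw [← splice_compl]
    calc pdistV w' (splice w' w Sᶜ)
        ≤ #{i ∈ Sᶜ | ∃ a b, w' i = some a ∧ w i = some b ∧ a ≠ b} := pdistV_splice_le w' w Sᶜ
      _ ≤ #(D \ S) := card_le_card fun i hi => by
          simp only [mem_filter, mem_compl, mem_sdiff, mem_univ, true_and, D] at hi ⊢
          obtain ⟨hiS, a, b, ha, hb, hab⟩ := hi
          exact ⟨⟨b, a, hb, ha, hab.symm⟩, hiS⟩
      _ ≤ 1 := by rw [card_sdiff_of_subset hSD]; omega

theorem np1cc_perfect_box_code_general (n : ℕ)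
    (C : Finset (Fin n → Fin 2)) (hcard : C.card * n = 2 ^ n)
    (hcov : ∀ v : Fin n → Fin 2, ∃ c ∈ C, hammingDist c v ≤ 1)
    (pair : (Fin n → Fin 2) → (Fin n → Fin 2))
    (hpair : ∀ c ∈ C, pair c ∈ C ∧ pair (pair c) = c ∧ hammingDist c (pair c) = 1) :
    (∀ c ∈ C, ∀ c' ∈ C, mesh c (pair c) ≠ mesh c' (pair c') →
      ∀ v : Fin n → Fin 2,
        ¬(pdistV (mesh c (pair c)) v ≤ 1 ∧ pdistV (mesh c' (pair c')) v ≤ 1)) ∧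
    (∀ v : Fin n → Fin 2, ∃ c ∈ C, pdistV (mesh c (pair c)) v ≤ 1) ∧
    (C.image (fun c => mesh c (pair c))).card * (2 * n) = 2 ^ n ∧
    (∀ c ∈ C, plen (mesh c (pair c)) = n - 1) ∧
    (∀ c ∈ C, ∀ c' ∈ C, mesh c (pair c) ≠ mesh c' (pair c') →
      3 ≤ pdist (mesh c (pair c)) (mesh c' (pair c'))) := by
  have hdist c (hc : c ∈ C) : hammingDist c (pair c) = 1 := (hpair c hc).2.2
  set M := C.image fun c => mesh c (pair c)
  have hcover (v : Fin n → Fin 2) : ∃ c ∈ C, pdistV (mesh c (pair c)) v ≤ 1 :=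
    (hcov v).imp fun c ⟨hc, hv⟩ => ⟨hc, (pdistV_mesh_le_hammingDist _ _ v).trans hv⟩
  have hMcard : #M * 2 = #C := card_image_mesh_mul_two hpair
  have hdisj : (M : Set (Fin n → Option (Fin 2))).PairwiseDisjoint
      fun w => univ.filter fun v => pdistV w v ≤ 1 := by
    apply pairwiseDisjoint_of_sum_card_le
    have hunion : (M.biUnion fun w => univ.filter fun v => pdistV w v ≤ 1) = univ :=
      eq_univ_of_forall fun v => by
        obtain ⟨c, hc, hv⟩ := hcover v
        exact mem_biUnion.mpr ⟨_, mem_image_of_mem _ hc, by simpa using hv⟩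
    rw [hunion, card_univ, Fintype.card_fun, Fintype.card_fin, Fintype.card_fin,
      sum_const_nat (m := 2 * n) fun w hw => ?_, ← hcard, ← hMcard]
    · exact le_of_eq (by ring)
    · obtain ⟨c, hc, rfl⟩ := mem_image.mp hw
      exact card_protectedBall_mesh (hdist c hc)
  have hsep : ∀ c ∈ C, ∀ c' ∈ C, mesh c (pair c) ≠ mesh c' (pair c') → ∀ v : Fin n → Fin 2,
      ¬(pdistV (mesh c (pair c)) v ≤ 1 ∧ pdistV (mesh c' (pair c')) v ≤ 1) := by
    rintro c hc c' hc' hne v ⟨hv, hv'⟩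
    exact disjoint_left.mp (hdisj (mem_image_of_mem _ hc) (mem_image_of_mem _ hc') hne)
      (by simpa using hv) (by simpa using hv')
  refine ⟨hsep, hcover, by rw [← hcard, ← hMcard]; ring, fun c hc => by rw [plen_mesh, hdist c hc],
    fun c hc c' hc' hne => ?_⟩
  by_contra hlt
  obtain ⟨v, hv, hv'⟩ := exists_pdistV_le_one_of_pdist_le_two (Nat.le_of_lt_succ (not_le.mp hlt))
  exact hsep c hc c' hc' hne v ⟨hv, hv'⟩

/-- from a nearly perfect binary 1-covering code `C` of even length `n`
with `|C| = 2^n/n`, admitting a perfect pairing into pairs at Hamming distance 1, meshing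
each pair yields a perfect binary box code: the radius-1 protected balls around the meshed
words are pairwise disjoint and cover `F_2^n`; the code has `2^(n−1)/n` codewords, each of
protected length `n−1`, and minimum protected distance `≥ 3`. -/
theorem np1cc_perfect_box_code (n : ℕ) (hn : 2 ≤ n) (hne : Even n)
    (C : Finset (Fin n → Fin 2)) (hcard : C.card * n = 2 ^ n)
    (hcov : ∀ v : Fin n → Fin 2, ∃ c ∈ C, hammingDist c v ≤ 1)
    (pair : (Fin n → Fin 2) → (Fin n → Fin 2))
    (hpair : ∀ c ∈ C, pair c ∈ C ∧ pair (pair c) = c ∧ hammingDist c (pair c) = 1) :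
    (∀ c ∈ C, ∀ c' ∈ C, mesh c (pair c) ≠ mesh c' (pair c') →
      ∀ v : Fin n → Fin 2,
        ¬(pdistV (mesh c (pair c)) v ≤ 1 ∧ pdistV (mesh c' (pair c')) v ≤ 1)) ∧
    (∀ v : Fin n → Fin 2, ∃ c ∈ C, pdistV (mesh c (pair c)) v ≤ 1) ∧
    (C.image (fun c => mesh c (pair c))).card * (2 * n) = 2 ^ n ∧
    (∀ c ∈ C, plen (mesh c (pair c)) = n - 1) ∧
    (∀ c ∈ C, ∀ c' ∈ C, mesh c (pair c) ≠ mesh c' (pair c') →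
      3 ≤ pdist (mesh c (pair c)) (mesh c' (pair c'))) :=
  np1cc_perfect_box_code_general n C hcard hcov pair hpair
end

section
/- Let C^□ be a binary box code for a graph G on M vertices (with no isolated vertices) with pairwise protected distance ≥ d along edges, protected length η, average length n, and let r = ⌊(d−1)/2⌋ ≥ 1. Then α(G)/M ≥ 2^{−n}(n/r)^r, and consequently n ≥ log₂(M/α(G)) + r·log₂(2·log₂(M/α(G))/(d−1)). -/
/-!
A full word `w ∈ {0,1}^η` can lie only in the box balls `{w | boxDist w (c u) ≤ r}` of pairwise
non-adjacent vertices, since adjacent codewords are at protected distance `≥ d > 2r`; hence the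
box balls have total size at most `α(G) 2^η`. A codeword of protected length `k` has a box ball of
size at least `C(k, r) 2^(η-k) ≥ 2^η · 2^(-k) (k/r)^r`, and `x ↦ 2^(-x) (x/r)^r` is convex for
`x ≥ 2r + 1`, so Jensen's inequality at the average length `n` gives `2^(-n) (n/r)^r ≤ α(G)/M`.
Taking logarithms yields `log₂(M/α(G)) + r log₂(n/r) ≤ n`, and the second bound follows from
`n ≥ log₂(M/α(G))` and `d - 1 ≥ 2r`.
-/

open Finset Real
open scoped Nat

/-- The box ball `B^□_r(x)` of the paper is `{w | boxDist w x ≤ r}`. -/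
def boxDist {η : ℕ} (w : Fin η → Fin 2) (x : Fin η → Option (Fin 2)) : ℕ :=
  #{i | ∃ a, x i = some a ∧ w i ≠ a}

theorem pdist_le_boxDist_add {η : ℕ} (w : Fin η → Fin 2) (x y : Fin η → Option (Fin 2)) :
    pdist x y ≤ boxDist w x + boxDist w y := by
  refine (card_le_card fun i hi => ?_).trans (card_union_le _ _)
  simp only [mem_filter, mem_union, mem_univ, true_and] at hi ⊢
  obtain ⟨a, b, hxa, hyb, hab⟩ := hi
  by_cases hwa : w i = a
  · exact Or.inr ⟨b, hyb, hwa ▸ hab⟩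
  · exact Or.inl ⟨a, hxa, hwa⟩

theorem pdist_le_plen {η : ℕ} (x y : Fin η → Option (Fin 2)) : pdist x y ≤ plen x :=
  card_le_card fun i hi => by
    obtain ⟨a, -, hxa, -⟩ := (mem_filter.1 hi).2
    simp [hxa]

section IndepNum

variable {V : Type*} [Fintype V] {G : SimpleGraph V}

theorem IsIndepSet.card_le_indepNum {s : Finset V} (hs : IsIndepSet G s) :
    #s ≤ indepNum G :=
  le_csSup ⟨Fintype.card V, by rintro _ ⟨t, -, rfl⟩; exact t.card_le_univ⟩ ⟨s, hs, rfl⟩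

theorem indepNum_le_card (G : SimpleGraph V) : indepNum G ≤ Fintype.card V :=
  csSup_le ⟨0, ∅, by simp [IsIndepSet]⟩ (by rintro _ ⟨t, -, rfl⟩; exact t.card_le_univ)

theorem one_le_indepNum [Nonempty V] (G : SimpleGraph V) : 1 ≤ indepNum G := by
  classical
  simpa using IsIndepSet.card_le_indepNum (G := G) (s := {Classical.arbitrary V})
    (by simp [IsIndepSet])

end IndepNum

theorem choose_mul_two_pow_le_card_filter_card_inter_le {α : Type*} [Fintype α] [DecidableEq α]
    (P : Finset α) (r : ℕ) :
    (#P).choose r * 2 ^ (Fintype.card α - #P) ≤ #{T : Finset α | #(T ∩ P) ≤ r} := by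
  have hcard : #(P.powersetCard r ×ˢ Pᶜ.powerset) = (#P).choose r * 2 ^ (Fintype.card α - #P) := by
    rw [card_product, card_powersetCard, card_powerset, card_compl]
  have hsplit : ∀ S U : Finset α, S ⊆ P → Disjoint P U → (S ∪ U) ∩ P = S ∧ (S ∪ U) \ P = U :=
    fun S U hS hU => ⟨by rw [union_inter_distrib_right, inter_eq_left.2 hS,
      disjoint_iff_inter_eq_empty.1 hU.symm, union_empty],
      by rw [union_sdiff_distrib, sdiff_eq_empty_iff_subset.2 hS, hU.symm.sdiff_eq_left,
      empty_union]⟩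
  rw [← hcard]
  refine card_le_card_of_injOn (fun p => p.1 ∪ p.2) ?_ ?_
  · rintro ⟨S, U⟩ hSU
    simp only [coe_product, Set.mem_prod, mem_coe, mem_powersetCard, mem_powerset,
      subset_compl_iff_disjoint_left] at hSU
    simp [(hsplit S U hSU.1.1 hSU.2).1, hSU.1.2]
  · rintro ⟨S, U⟩ hSU ⟨S', U'⟩ hSU' h
    simp only [coe_product, Set.mem_prod, mem_coe, mem_powersetCard, mem_powerset,
      subset_compl_iff_disjoint_left] at hSU hSU'
    obtain ⟨hS, hU⟩ := hsplit S U hSU.1.1 hSU.2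
    obtain ⟨hS', hU'⟩ := hsplit S' U' hSU'.1.1 hSU'.2
    replace h : S ∪ U = S' ∪ U' := h
    exact Prod.ext (hS.symm.trans (h ▸ hS')) (hU.symm.trans (h ▸ hU'))

theorem choose_mul_two_pow_le_card_boxBall {η : ℕ} (x : Fin η → Option (Fin 2)) (r : ℕ) :
    (plen x).choose r * 2 ^ (η - plen x) ≤ #{w | boxDist w x ≤ r} := by
  classical
  set P : Finset (Fin η) := {i | (x i).isSome}
  let x₀ : Fin η → Fin 2 := fun i => (x i).getD 0
  let flipAt : Finset (Fin η) → Fin η → Fin 2 := fun T i => if i ∈ T then x₀ i + 1 else x₀ i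
  have hflipAt : ∀ T i, flipAt T i ≠ x₀ i ↔ i ∈ T := fun T i => by
    by_cases hi : i ∈ T <;> simp [flipAt, hi]
  have hdist : ∀ T, boxDist (flipAt T) x = #(T ∩ P) := fun T => by
    refine congrArg card (ext fun i => ?_)
    simp only [mem_filter, mem_univ, true_and, mem_inter, P, Option.isSome_iff_exists]
    constructor
    · rintro ⟨a, hxa, hne⟩
      exact ⟨(hflipAt T i).1 (by simpa [x₀, hxa] using hne), a, hxa⟩
    · rintro ⟨hiT, a, hxa⟩
      exact ⟨a, hxa, by simpa [x₀, hxa] using (hflipAt T i).2 hiT⟩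
  calc (plen x).choose r * 2 ^ (η - plen x) ≤ #{T : Finset (Fin η) | #(T ∩ P) ≤ r} := by
        simpa [P, plen] using choose_mul_two_pow_le_card_filter_card_inter_le P r
    _ ≤ #{w | boxDist w x ≤ r} := by
        refine card_le_card_of_injOn flipAt (fun T hT => ?_) (fun T _ T' _ h => ?_)
        · simpa [hdist] using hT
        · ext i
          rw [← hflipAt, ← hflipAt, h]

theorem Nat.pow_mul_factorial_le_descFactorial_mul_pow {n r : ℕ} (h : r ≤ n) :
    n ^ r * r ! ≤ n.descFactorial r * r ^ r := by
  rw [← Nat.descFactorial_self, Nat.descFactorial_eq_prod_range, Nat.descFactorial_eq_prod_range]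
  rw [show n ^ r = ∏ _i ∈ range r, n by simp, show r ^ r = ∏ _i ∈ range r, r by simp,
    ← prod_mul_distrib, ← prod_mul_distrib]
  refine prod_le_prod' fun i _ => ?_
  rw [Nat.mul_sub, Nat.sub_mul, mul_comm n i]
  exact Nat.sub_le_sub_left (Nat.mul_le_mul_left i h) _

theorem Nat.div_pow_le_choose {α : Type*} [Field α] [LinearOrder α] [IsStrictOrderedRing α]
    {n r : ℕ} (h : r ≤ n) : ((n : α) / r) ^ r ≤ n.choose r := by
  rcases r.eq_zero_or_pos with rfl | hr
  · simp
  rw [div_pow, div_le_iff₀ (by positivity)]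
  have key := Nat.pow_mul_factorial_le_descFactorial_mul_pow h
  rw [Nat.descFactorial_eq_factorial_mul_choose, mul_assoc, mul_comm (r !)] at key
  exact_mod_cast Nat.le_of_mul_le_mul_right key r.factorial_pos

theorem convexOn_pow_mul_exp_neg_mul {a : ℝ} (ha : 0 < a) (r : ℕ) :
    ConvexOn ℝ (Set.Ici ((r + √r) / a)) fun x => x ^ r * exp (-(a * x)) := by
  have hexp (x : ℝ) : HasDerivAt (fun x => exp (-(a * x))) (exp (-(a * x)) * -a) x := by
    simpa using ((hasDerivAt_id x).const_mul a).neg.exp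
  refine convexOn_of_hasDerivWithinAt2_nonneg (convex_Ici _) (by fun_prop)
    (f' := fun x => (r * x ^ (r - 1) - a * x ^ r) * exp (-(a * x)))
    (f'' := fun x =>
      (r * ((r - 1 : ℕ) * x ^ (r - 1 - 1)) - 2 * a * (r * x ^ (r - 1)) + a ^ 2 * x ^ r) *
        exp (-(a * x)))
    (fun x _ => ?_) (fun x _ => ?_) (fun x hx => ?_)
  · exact (((hasDerivAt_pow r x).mul (hexp x)).congr_deriv (by ring)).hasDerivWithinAt
  · exact (((((hasDerivAt_pow (r - 1) x).const_mul (r : ℝ)).fun_sub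
      ((hasDerivAt_pow r x).const_mul a)).mul (hexp x)).congr_deriv (by ring)).hasDerivWithinAt
  · rw [interior_Ici, Set.mem_Ioi, div_lt_iff₀ ha] at hx
    have hx0 : 0 < x := by nlinarith [sqrt_nonneg r]
    -- `(a x - r)² - r` carries the sign of the second derivative; it is nonnegative from
    -- `x = (r + √r) / a` on
    have hquad : 0 ≤ (a * x - r) ^ 2 - r := by
      nlinarith [sq_sqrt (Nat.cast_nonneg r : (0 : ℝ) ≤ r), sqrt_nonneg r]
    have hscaled : x ^ 2 * (r * ((r - 1 : ℕ) * x ^ (r - 1 - 1)) - 2 * a * (r * x ^ (r - 1))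
        + a ^ 2 * x ^ r) = x ^ r * ((a * x - r) ^ 2 - r) := by
      rcases r with _ | _ | k <;> simp <;> ring
    refine mul_nonneg (nonneg_of_mul_nonneg_right ?_ (pow_pos hx0 2)) (exp_pos _).le
    rw [hscaled]
    exact mul_nonneg (pow_nonneg hx0.le r) hquad

theorem convexOn_two_rpow_neg_mul_div_pow (r : ℕ) :
    ConvexOn ℝ (Set.Ici (2 * (r : ℝ) + 1)) fun x : ℝ => 2 ^ (-x) * (x / r) ^ r := by
  have hlog : (0.69 : ℝ) < log 2 := by have := log_two_gt_d9; linarith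
  have hsub : Set.Ici (2 * (r : ℝ) + 1) ⊆ Set.Ici ((r + √r) / log 2) := by
    refine Set.Ici_subset_Ici.2 ((div_le_iff₀ (by linarith)).2 ?_)
    -- with `s = √r` this is `0.38 s² - s + 0.69 ≥ 0`, a square plus a positive constant
    nlinarith [sq_sqrt (Nat.cast_nonneg r : (0 : ℝ) ≤ r), sq_nonneg (√r - 25 / 19),
      mul_le_mul_of_nonneg_left hlog.le (by positivity : (0 : ℝ) ≤ 2 * r + 1)]
  refine (((convexOn_pow_mul_exp_neg_mul (by linarith) r).subset hsub (convex_Ici _)).smul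
    (by positivity : (0 : ℝ) ≤ ((r : ℝ) ^ r)⁻¹)).congr fun x _ => ?_
  simp only [smul_eq_mul, rpow_def_of_pos two_pos, div_pow]
  ring_nf

theorem two_rpow_neg_mul_div_pow_le_card_boxBall_div {η r : ℕ} (x : Fin η → Option (Fin 2))
    (hr : r ≤ plen x) :
    (2 : ℝ) ^ (-(plen x : ℝ)) * (plen x / r) ^ r ≤ #{w | boxDist w x ≤ r} / 2 ^ η := by
  have hη : plen x ≤ η := (card_le_univ _).trans_eq (Fintype.card_fin η)
  have h2η : (2 : ℝ) ^ η = 2 ^ (η - plen x) * 2 ^ plen x := by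
    rw [← pow_add, Nat.sub_add_cancel hη]
  calc (2 : ℝ) ^ (-(plen x : ℝ)) * (plen x / r) ^ r ≤ ((2 : ℝ) ^ plen x)⁻¹ * (plen x).choose r := by
        rw [rpow_neg two_pos.le, rpow_natCast]
        gcongr
        exact Nat.div_pow_le_choose hr
    _ = ((plen x).choose r * 2 ^ (η - plen x) : ℕ) / 2 ^ η := by
        rw [h2η]; push_cast; field_simp
    _ ≤ #{w | boxDist w x ≤ r} / 2 ^ η := by
        gcongr
        exact choose_mul_two_pow_le_card_boxBall x r

section BoxCode

variable {V : Type*} [Fintype V] {G : SimpleGraph V} {η d r : ℕ} {c : V → Fin η → Option (Fin 2)}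

theorem isIndepSet_filter_boxDist_le (hc : ∀ u v, G.Adj u v → d ≤ pdist (c u) (c v))
    (hrd : 2 * r < d) (w : Fin η → Fin 2) : IsIndepSet G {u | boxDist w (c u) ≤ r} := by
  intro u hu v hv _ huv
  simp only [mem_filter, mem_univ, true_and] at hu hv
  have := (hc u v huv).trans (pdist_le_boxDist_add w (c u) (c v))
  omega

theorem sum_card_boxBall_le (hc : ∀ u v, G.Adj u v → d ≤ pdist (c u) (c v)) (hrd : 2 * r < d) :
    ∑ u, #{w | boxDist w (c u) ≤ r} ≤ indepNum G * 2 ^ η := by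
  classical
  calc ∑ u, #{w | boxDist w (c u) ≤ r}
      = ∑ w : Fin η → Fin 2, #{u | boxDist w (c u) ≤ r} :=
        sum_card_bipartiteAbove_eq_sum_card_bipartiteBelow _
    _ ≤ ∑ _w : Fin η → Fin 2, indepNum G :=
        sum_le_sum fun w _ => (isIndepSet_filter_boxDist_le hc hrd w).card_le_indepNum
    _ = indepNum G * 2 ^ η := by simp [mul_comm]

theorem two_rpow_neg_mul_div_pow_le_indepNum_div [Nonempty V]
    (hc : ∀ u v, G.Adj u v → d ≤ pdist (c u) (c v)) (hrd : 2 * r < d)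
    (hlen : ∀ u, d ≤ plen (c u)) {n : ℝ} (hn : n = (∑ u, (plen (c u) : ℝ)) / Fintype.card V) :
    (2 : ℝ) ^ (-n) * (n / r) ^ r ≤ indepNum G / Fintype.card V := by
  have hjensen := (convexOn_two_rpow_neg_mul_div_pow r).map_centerMass_le (t := univ)
    (w := fun _ => (1 : ℝ)) (p := fun u => (plen (c u) : ℝ)) (fun _ _ => zero_le_one)
    (by simpa using Fintype.card_pos) (fun u _ => ?_)
  · simp only [centerMass, sum_const, card_univ, nsmul_eq_mul, mul_one, one_mul, smul_eq_mul,
      Function.comp_def, inv_mul_eq_div, ← hn] at hjensen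
    have hballs : (∑ u, #{w | boxDist w (c u) ≤ r} : ℝ) ≤ indepNum G * 2 ^ η := by
      exact_mod_cast sum_card_boxBall_le hc hrd
    calc (2 : ℝ) ^ (-n) * (n / r) ^ r
        ≤ (∑ u, (2 : ℝ) ^ (-(plen (c u) : ℝ)) * (plen (c u) / r) ^ r) / Fintype.card V :=
          hjensen
      _ ≤ (∑ u, (#{w | boxDist w (c u) ≤ r} : ℝ) / 2 ^ η) / Fintype.card V := by
          gcongr with u
          exact two_rpow_neg_mul_div_pow_le_card_boxBall_div _ (by have := hlen u; omega)
      _ ≤ indepNum G / Fintype.card V := by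
          rw [← sum_div]
          gcongr
          exact div_le_of_le_mul₀ (by positivity) (by positivity) hballs
  · have := hlen u
    simp only [Set.mem_Ici]
    exact_mod_cast (by omega : 2 * r + 1 ≤ plen (c u))

end BoxCode

theorem logb_add_mul_logb_le_of_two_rpow_neg_mul_div_pow_le {q n D : ℝ} {r : ℕ} (hr : 0 < r)
    (hrn : r ≤ n) (hrD : 2 * r ≤ D) (hq : 1 ≤ q) (h : 2 ^ (-n) * (n / r) ^ r ≤ q⁻¹) :
    logb 2 q + r * logb 2 (2 * logb 2 q / D) ≤ n := by
  have hr' : (0 : ℝ) < r := Nat.cast_pos.2 hr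
  have hnr : 1 ≤ n / r := (one_le_div hr').2 hrn
  have hkey : logb 2 q + r * logb 2 (n / r) ≤ n := by
    have := logb_le_logb_of_le one_lt_two (by positivity) h
    rw [logb_mul (by positivity) (by positivity), logb_pow, logb_rpow two_pos (by norm_num),
      logb_inv] at this
    linarith
  have hlogn : 0 ≤ logb 2 (n / r) := logb_nonneg one_lt_two hnr
  rcases (logb_nonneg one_lt_two hq).eq_or_lt with hL | hL
  · rw [← hL, mul_zero, zero_div, logb_zero]
    linarith
  · have hLn : logb 2 q ≤ n := by nlinarith [mul_nonneg hr'.le hlogn]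
    have hD : 0 < D := by linarith
    have harg : 2 * logb 2 q / D ≤ n / r := by
      rw [div_le_div_iff₀ hD hr']
      nlinarith [mul_le_mul_of_nonneg_left hrD (hr'.le.trans hrn)]
    have := logb_le_logb_of_le one_lt_two (by positivity) harg
    nlinarith

/-- for a binary box code on the vertices of a graph `G` without
isolated vertices, with protected distance `≥ d` along edges, average length `n`, and
`r = ⌊(d−1)/2⌋ ≥ 1`, we have `α(G)/M ≥ 2^(−n)·(n/r)^r`, and consequently
`n ≥ log₂(M/α(G)) + r·log₂(2·log₂(M/α(G))/(d−1))`. -/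
theorem box_code_graph_lower_bound (M η d r : ℕ) (hM : 1 ≤ M)
    (G : SimpleGraph (Fin M)) (hiso : ∀ u : Fin M, ∃ v, G.Adj u v)
    (c : Fin M → Fin η → Option (Fin 2))
    (hc : ∀ u v : Fin M, G.Adj u v → d ≤ pdist (c u) (c v))
    (hr : r = (d - 1) / 2) (hr1 : 1 ≤ r)
    (n : ℝ) (hn : n = (∑ u, (plen (c u) : ℝ)) / M) :
    (2 : ℝ) ^ (-n) * (n / r) ^ r ≤ (indepNum G : ℝ) / M ∧
    Real.logb 2 ((M : ℝ) / indepNum G) +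
        r * Real.logb 2 (2 * Real.logb 2 ((M : ℝ) / indepNum G) / (d - 1)) ≤ n := by
  have : Nonempty (Fin M) := ⟨⟨0, hM⟩⟩
  have hrd : 2 * r < d := by omega
  have hlen : ∀ u, d ≤ plen (c u) := fun u =>
    (hiso u).elim fun v huv => (hc u v huv).trans (pdist_le_plen _ _)
  have hdensity : (2 : ℝ) ^ (-n) * (n / r) ^ r ≤ indepNum G / M := by
    simpa using two_rpow_neg_mul_div_pow_le_indepNum_div hc hrd hlen (by simpa using hn)
  have hdn : (d : ℝ) ≤ n := by
    rw [hn, le_div_iff₀ (by positivity)]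
    calc (d : ℝ) * M = ∑ _u : Fin M, (d : ℝ) := by simp [mul_comm]
      _ ≤ ∑ u, (plen (c u) : ℝ) := sum_le_sum fun u _ => by exact_mod_cast hlen u
  have hα : (0 : ℝ) < indepNum G := by exact_mod_cast one_le_indepNum G
  have hαM : (indepNum G : ℝ) ≤ M := by simpa using (Nat.cast_le (α := ℝ)).2 (indepNum_le_card G)
  refine ⟨hdensity, logb_add_mul_logb_le_of_two_rpow_neg_mul_div_pow_le hr1 ?_ ?_
    ((one_le_div hα).2 hαM) (by rwa [inv_div])⟩
  · exact le_trans (by exact_mod_cast (by omega : r ≤ d)) hdn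
  · have : (2 * r + 1 : ℝ) ≤ d := by exact_mod_cast hrd
    linarith
end
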